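/- Let G be a basic CUH graph. If one of the two color classes of G is finite, then ω_R = ω_B = 1 (both color classes are independent sets) and G is homogeneously connected (all cross edges between the color classes are present, or none are). -/

import Mathlib

open SimpleGraph

/-- A partial colored isomorphism of the 2-colored graph `(G, red)`, defined on the set `S`:
an injective map preserving colors and adjacency on `S`. -/
def IsPartialIso {V : Type} (G : SimpleGraph V) (red : V → Prop) (S : Set V) (f : V → V) :
    Prop :=
  Set.InjOn f S ∧ (∀ v ∈ S, (red (f v) ↔ red v)) ∧
    ∀ u ∈ S, ∀ v ∈ S, (G.Adj (f u) (f v) ↔ G.Adj u v)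

/-- A 2-colored graph is ultrahomogeneous if every isomorphism between two finite induced
colored subgraphs extends to a color-preserving automorphism. -/
def Ultrahomogeneous {V : Type} (G : SimpleGraph V) (red : V → Prop) : Prop :=
  ∀ S : Set V, S.Finite → ∀ f : V → V, IsPartialIso G red S f →
    ∃ ψ : G ≃g G, (∀ v, red (ψ v) ↔ red v) ∧ ∀ v ∈ S, ψ v = f v

/-- The set `P` induces a disjoint union of cliques in `G` (no induced monochromatic `P₃`). -/
def IsUnionOfCliques {V : Type} (G : SimpleGraph V) (P : Set V) : Prop :=
  ∀ u ∈ P, ∀ v ∈ P, ∀ w ∈ P, G.Adj u v → G.Adj v w → u ≠ w → G.Adj u w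

/-- `M` is an inclusion-wise maximal clique of the subgraph of `G` induced on `P`. -/
def IsMaxCliqueIn {V : Type} (G : SimpleGraph V) (P : Set V) (M : Set V) : Prop :=
  M ⊆ P ∧ G.IsClique M ∧ ∀ M' : Set V, M' ⊆ P → G.IsClique M' → M ⊆ M' → M = M'

/-- `S` is an independent set in `G`. -/
def IsIndepIn {V : Type} (G : SimpleGraph V) (S : Set V) : Prop :=
  ∀ u ∈ S, ∀ v ∈ S, ¬ G.Adj u v

/-- The 2-colored graph `(H, redH)` is realized in `(G, red)`, i.e. isomorphic to an
induced colored subgraph of `G`. -/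
def Realizes {V : Type} (G : SimpleGraph V) (red : V → Prop) {W : Type} (H : SimpleGraph W)
    (redH : W → Prop) : Prop :=
  ∃ f : W → V, Function.Injective f ∧ (∀ w, red (f w) ↔ redH w) ∧
    ∀ u w : W, G.Adj (f u) (f w) ↔ H.Adj u w

/-- `(H, redH)` is minimally omitted in `(G, red)`: it is omitted, but every proper induced
subgraph of it is realized. -/
def MinOmitted {V : Type} (G : SimpleGraph V) (red : V → Prop) {W : Type} (H : SimpleGraph W)
    (redH : W → Prop) : Prop :=
  ¬ Realizes G red H redH ∧
    ∀ S : Set W, S ≠ Set.univ → Realizes G red (H.induce S) (fun x => redH x.1)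

/-- Isomorphism of 2-colored graphs. -/
def ColoredIso {V : Type} (G : SimpleGraph V) (red : V → Prop) {W : Type} (H : SimpleGraph W)
    (redH : W → Prop) : Prop :=
  ∃ e : G ≃g H, ∀ v, red v ↔ redH (e v)

/-- The graph obtained from `G` by complementing the cross edges while keeping the
edges inside each color class. -/
def crossComp {V : Type} (G : SimpleGraph V) (red : V → Prop) : SimpleGraph V :=
  SimpleGraph.fromRel (fun u v =>
    ((red u ↔ red v) ∧ G.Adj u v) ∨ (¬ (red u ↔ red v) ∧ ¬ G.Adj u v))

/-- The blow-up of the 2-colored graph `(H, redH)` (whose red class should be independent),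
replacing every red vertex by a copy of `I` forming a clique, joined to the neighbors of the
original vertex. -/
def blowUp {V : Type} (H : SimpleGraph V) (redH : V → Prop) (I : Type) :
    SimpleGraph ({v : V // redH v} × I ⊕ {v : V // ¬ redH v}) :=
  SimpleGraph.fromRel (fun x y =>
    match x, y with
    | Sum.inl (u, i), Sum.inl (u', i') => H.Adj u.1 u'.1 ∨ (u = u' ∧ i ≠ i')
    | Sum.inl (u, _), Sum.inr b => H.Adj u.1 b.1
    | Sum.inr b, Sum.inl (u, _) => H.Adj b.1 u.1
    | Sum.inr b, Sum.inr b' => H.Adj b.1 b'.1)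

/-- The coloring of the blow-up: all vertices replacing red vertices are red. -/
def blowUpRed (V : Type) (redH : V → Prop) (I : Type) :
    ({v : V // redH v} × I ⊕ {v : V // ¬ redH v}) → Prop :=
  Sum.elim (fun _ => True) (fun _ => False)

/-- `(G, red)` is a blow-up with the red class blown up: it is isomorphic (as a colored graph)
to the blow-up of some `(H, redH)` with independent red class by an `i`-clique, `2 ≤ i ≤ ℵ₀`. -/
def IsBlowUpOf {V : Type} (G : SimpleGraph V) (red : V → Prop) : Prop :=
  ∃ (U : Type) (H : SimpleGraph U) (redH : U → Prop) (I : Type),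
    (∀ u v : U, redH u → redH v → ¬ H.Adj u v) ∧
    2 ≤ Cardinal.mk I ∧ Cardinal.mk I ≤ Cardinal.aleph0 ∧
    ∃ e : G ≃g blowUp H redH I, ∀ v, red v ↔ blowUpRed U redH I (e v)

/-- `(G, red)` is a blow-up (of one of its two color classes). -/
def IsBlowUp {V : Type} (G : SimpleGraph V) (red : V → Prop) : Prop :=
  IsBlowUpOf G red ∨ IsBlowUpOf G (fun v => ¬ red v)

/-- A CUH graph: a countably infinite ultrahomogeneous 2-colored graph in which both
color classes induce disjoint unions of cliques. -/
def IsCUH {V : Type} (G : SimpleGraph V) (red : V → Prop) : Prop :=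
  Countable V ∧ Infinite V ∧ Ultrahomogeneous G red ∧
    IsUnionOfCliques G {v | red v} ∧ IsUnionOfCliques G {v | ¬ red v}

/-- A basic CUH graph: a CUH graph which is not a blow-up and where both independence
numbers are at least 2. -/
def IsBasicCUH {V : Type} (G : SimpleGraph V) (red : V → Prop) : Prop :=
  IsCUH G red ∧ ¬ IsBlowUp G red ∧
    (∃ u v, red u ∧ red v ∧ u ≠ v ∧ ¬ G.Adj u v) ∧
    (∃ u v, ¬ red u ∧ ¬ red v ∧ u ≠ v ∧ ¬ G.Adj u v)

/-- The graph `D`: red vertices `0, 1`, blue vertices `2, 3`, edges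
`{01, 23, 02, 03, 12}` (a 2-colored diamond). -/
def Dgraph : SimpleGraph (Fin 4) :=
  SimpleGraph.fromRel (fun x y =>
    (x = 0 ∧ y = 1) ∨ (x = 2 ∧ y = 3) ∨ (x = 0 ∧ y = 2) ∨ (x = 0 ∧ y = 3) ∨ (x = 1 ∧ y = 2))

/-- The coloring of `D` and `D̃`: `0, 1` are red, `2, 3` are blue. -/
def Dred : Fin 4 → Prop := fun x => x = 0 ∨ x = 1

/-- The graph `D̃`, the cross-edge complement of `D`: the path `0 – 1 – 3 – 2`. -/
def Dtilde : SimpleGraph (Fin 4) :=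
  SimpleGraph.fromRel (fun x y => (x = 0 ∧ y = 1) ∨ (x = 1 ∧ y = 3) ∨ (x = 3 ∧ y = 2))

/-- `T_r`: the triangle with two red vertices and one blue vertex. -/
def Tr : SimpleGraph (Fin 3) := ⊤

/-- The coloring of `T_r` and `T̃_r`: `0, 1` red, `2` blue. -/
def TrRed : Fin 3 → Prop := fun x => x = 0 ∨ x = 1

/-- `T̃_r`: a red edge together with an isolated blue vertex. -/
def TrTilde : SimpleGraph (Fin 3) := SimpleGraph.fromRel (fun x y => x = 0 ∧ y = 1)

/-- `T_b`: the triangle with one red vertex and two blue vertices. -/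
def Tb : SimpleGraph (Fin 3) := ⊤

/-- The coloring of `T_b` and `T̃_b`: `0` red, `1, 2` blue. -/
def TbRed : Fin 3 → Prop := fun x => x = 0

/-- `T̃_b`: a blue edge together with an isolated red vertex. -/
def TbTilde : SimpleGraph (Fin 3) := SimpleGraph.fromRel (fun x y => x = 1 ∧ y = 2)

lemma uh_neg {V : Type} {G : SimpleGraph V} {red : V → Prop}
    (h : Ultrahomogeneous G red) : Ultrahomogeneous G (fun v => ¬ red v) := by
  intro S hS f hf
  obtain ⟨hinj, hcol, hadj⟩ := hf
  obtain ⟨ψ, h1, h2⟩ := h S hS f ⟨hinj, fun v hv => not_iff_not.mp (hcol v hv), hadj⟩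
  exact ⟨ψ, fun v => not_iff_not.mpr (h1 v), h2⟩

lemma singleTrans {V : Type} {G : SimpleGraph V} {P : V → Prop}
    (hUH : Ultrahomogeneous G P) {u v : V} (hc : P v ↔ P u) :
    ∃ ψ : G ≃g G, (∀ x, P (ψ x) ↔ P x) ∧ ψ u = v := by
  obtain ⟨ψ, h1, h2⟩ := hUH {u} (Set.finite_singleton u) (fun _ => v)
    ⟨Set.injOn_singleton _ _, by simpa using hc, by simp⟩
  exact ⟨ψ, h1, h2 u rfl⟩

lemma pairTrans {V : Type} {G : SimpleGraph V} {P : V → Prop}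
    (hUH : Ultrahomogeneous G P) {u v u' v' : V} (huv : u ≠ v) (hu'v' : u' ≠ v')
    (hcu : P u' ↔ P u) (hcv : P v' ↔ P v) (hadj : G.Adj u' v' ↔ G.Adj u v) :
    ∃ ψ : G ≃g G, (∀ x, P (ψ x) ↔ P x) ∧ ψ u = u' ∧ ψ v = v' := by
  classical
  have hfin : ({u, v} : Set V).Finite := (Set.finite_singleton v).insert u
  set f : V → V := fun x => if x = u then u' else v' with hfdef
  have hfu : f u = u' := by simp [hfdef]
  have hfv : f v = v' := by simp [hfdef, huv.symm]
  have hpi : IsPartialIso G P {u, v} f := by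
    refine ⟨?_, ?_, ?_⟩
    · intro x hx y hy hxy
      rcases hx with rfl | hx <;> rcases hy with rfl | hy
      · rfl
      · rw [Set.mem_singleton_iff] at hy; subst hy
        rw [hfu, hfv] at hxy; exact absurd hxy hu'v'
      · rw [Set.mem_singleton_iff] at hx; subst hx
        rw [hfu, hfv] at hxy; exact absurd hxy.symm hu'v'
      · rw [Set.mem_singleton_iff] at hx hy; rw [hx, hy]
    · intro x hx
      rcases hx with rfl | hx
      · rw [hfu]; exact hcu
      · rw [Set.mem_singleton_iff] at hx; subst hx; rw [hfv]; exact hcv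
    · intro x hx y hy
      rcases hx with rfl | hx <;> rcases hy with rfl | hy
      · rw [hfu]; simp
      · rw [Set.mem_singleton_iff] at hy; subst hy; rw [hfu, hfv]; exact hadj
      · rw [Set.mem_singleton_iff] at hx; subst hx; rw [hfu, hfv]
        rw [G.adj_comm v' u', G.adj_comm x y]; exact hadj
      · rw [Set.mem_singleton_iff] at hx hy; subst hx; subst hy; rw [hfv]; simp
  obtain ⟨ψ, h1, h2⟩ := hUH {u, v} hfin f hpi
  exact ⟨ψ, h1, by rw [h2 u (by simp), hfu], by rw [h2 v (by simp), hfv]⟩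

section BU

variable {V : Type} (G : SimpleGraph V) (P : V → Prop)

/-- The clique of `v` inside class `P` (assuming `P v`). -/
def buK (v : V) : Type := {w : V // w = v ∨ (P w ∧ G.Adj v w)}

variable (hcliq : IsUnionOfCliques G {v | P v})

def buSetoid : Setoid {v : V // P v} where
  r a b := a.1 = b.1 ∨ G.Adj a.1 b.1
  iseqv := by
    constructor
    · exact fun a => Or.inl rfl
    · rintro a b (h | h)
      · exact Or.inl h.symm
      · exact Or.inr h.symm
    · rintro a b c (h | h) (h' | h')
      · exact h ▸ Or.inl h'
      · exact h ▸ Or.inr h'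
      · exact h' ▸ Or.inr h
      · by_cases hac : a.1 = c.1
        · exact Or.inl hac
        · exact Or.inr (hcliq a.1 a.2 b.1 b.2 c.1 c.2 h h' hac)

def buQ : Type := Quotient (buSetoid G P hcliq)

def buU : Type := buQ G P hcliq ⊕ {v : V // ¬ P v}

def buRedH : buU G P hcliq → Prop := Sum.elim (fun _ => True) (fun _ => False)

/-- representative of a class -/
noncomputable def buRep (c : buQ G P hcliq) : V := (Quotient.out c).1

lemma buRep_P (c : buQ G P hcliq) : P (buRep G P hcliq c) := (Quotient.out c).2

lemma buRel_rep {v : V} (h : P v) :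
    buRep G P hcliq (Quotient.mk (buSetoid G P hcliq) ⟨v, h⟩) = v ∨
      G.Adj (buRep G P hcliq (Quotient.mk (buSetoid G P hcliq) ⟨v, h⟩)) v := by
  have := Quotient.exact (Quotient.out_eq (Quotient.mk (buSetoid G P hcliq) ⟨v, h⟩))
  exact this

noncomputable def buH : SimpleGraph (buU G P hcliq) where
  Adj x y := match x, y with
    | Sum.inl _, Sum.inl _ => False
    | Sum.inl c, Sum.inr b => G.Adj (buRep G P hcliq c) b.1
    | Sum.inr b, Sum.inl c => G.Adj (buRep G P hcliq c) b.1
    | Sum.inr b, Sum.inr b' => G.Adj b.1 b'.1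
  symm := by
    constructor
    rintro (c | b) (c' | b') h
    · exact h
    · exact h
    · exact h
    · exact h.symm
  loopless := by
    constructor
    rintro (c | b) h
    · exact h
    · exact G.loopless.irrefl _ h

end BU

section BU2

variable {V : Type} {G : SimpleGraph V} {P : V → Prop} (hcliq : IsUnionOfCliques G {v | P v})
  {v₀ : V}
  (phi : (c : buQ G P hcliq) → buK G P (buRep G P hcliq c) ≃ buK G P v₀)

open Classical in
noncomputable def buE (v : V) :
    ({u : buU G P hcliq // buRedH G P hcliq u} × buK G P v₀ ⊕
      {u : buU G P hcliq // ¬ buRedH G P hcliq u}) :=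
  if h : P v then
    Sum.inl (⟨Sum.inl (Quotient.mk (buSetoid G P hcliq) ⟨v, h⟩), trivial⟩,
      phi _ ⟨v, (buRel_rep G P hcliq h).elim (fun h' => Or.inl h'.symm)
        (fun h' => Or.inr ⟨h, h'⟩)⟩)
  else Sum.inr ⟨Sum.inr ⟨v, h⟩, not_false⟩

noncomputable def buE' :
    ({u : buU G P hcliq // buRedH G P hcliq u} × buK G P v₀ ⊕
      {u : buU G P hcliq // ¬ buRedH G P hcliq u}) → V := fun w =>
  match w with
  | Sum.inl (⟨Sum.inl c, _⟩, i) => ((phi c).symm i).1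
  | Sum.inl (⟨Sum.inr b, _⟩, _) => b.1
  | Sum.inr ⟨Sum.inl c, _⟩ => buRep G P hcliq c
  | Sum.inr ⟨Sum.inr b, _⟩ => b.1

lemma buPhi_congr {c c' : buQ G P hcliq} (h : c = c') (k : buK G P (buRep G P hcliq c))
    (k' : buK G P (buRep G P hcliq c')) (hk : k.1 = k'.1) : phi c k = phi c' k' := by
  subst h
  rw [Subtype.ext hk]

lemma buE_leftInv : Function.LeftInverse (buE' hcliq phi) (buE hcliq phi) := by
  intro v
  by_cases h : P v
  · simp only [buE, dif_pos h, buE', Equiv.symm_apply_apply]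
    exact congrArg Subtype.val ((phi _).symm_apply_apply _)
  · simp only [buE, dif_neg h, buE']

lemma buE_P_mem {v : V} (h : P v) {c : buQ G P hcliq}
    (hc : Quotient.mk (buSetoid G P hcliq) ⟨v, h⟩ = c) :
    v = buRep G P hcliq c ∨ (P v ∧ G.Adj (buRep G P hcliq c) v) := by
  subst hc
  exact (buRel_rep G P hcliq h).elim (fun h' => Or.inl h'.symm) (fun h' => Or.inr ⟨h, h'⟩)

lemma buE_eq_of_P {v : V} (h : P v) :
    buE hcliq phi v =
      Sum.inl (⟨Sum.inl (Quotient.mk (buSetoid G P hcliq) ⟨v, h⟩), trivial⟩,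
        phi _ ⟨v, buE_P_mem hcliq h rfl⟩) := by
  simp only [buE, dif_pos h]

lemma buE_eq_of_not_P {v : V} (h : ¬ P v) :
    buE hcliq phi v = Sum.inr ⟨Sum.inr ⟨v, h⟩, not_false⟩ := by
  simp only [buE, dif_neg h]

lemma buE_rightInv : Function.RightInverse (buE' hcliq phi) (buE hcliq phi) := by
  rintro (⟨⟨c | b, hu⟩, i⟩ | ⟨c | b, hu⟩)
  · -- main case: a red-copy vertex
    set x := (phi c).symm i with hx
    have hPx : P x.1 := by
      rcases x.2 with h | h
      · rw [h]; exact buRep_P G P hcliq c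
      · exact h.1
    have hcc : Quotient.mk (buSetoid G P hcliq) ⟨x.1, hPx⟩ = c := by
      refine (Quotient.sound ?_).trans (Quotient.out_eq c)
      rcases x.2 with h | h
      · exact Or.inl h
      · exact Or.inr h.2.symm
    show buE hcliq phi x.1 = _
    rw [buE_eq_of_P hcliq phi hPx]
    congr 1
    refine Prod.ext ?_ ?_
    · exact Subtype.ext (congrArg Sum.inl hcc)
    · show phi _ ⟨x.1, buE_P_mem hcliq hPx rfl⟩ = i
      exact (buPhi_congr hcliq phi hcc _ _ rfl).trans ((phi c).apply_symm_apply i)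
  · exact absurd hu (by simp [buRedH])
  · exact absurd trivial hu
  · show buE hcliq phi b.1 = _
    rw [buE_eq_of_not_P hcliq phi b.2]

end BU2

section BU3

lemma blowUp_adj_inl_inl {U : Type} (H : SimpleGraph U) (redH : U → Prop) {I : Type}
    (u u' : {v : U // redH v}) (i i' : I) :
    (blowUp H redH I).Adj (Sum.inl (u, i)) (Sum.inl (u', i')) ↔
      (Sum.inl (u, i) : _ ⊕ {v : U // ¬ redH v}) ≠ Sum.inl (u', i') ∧
        ((H.Adj u.1 u'.1 ∨ (u = u' ∧ i ≠ i')) ∨ (H.Adj u'.1 u.1 ∨ (u' = u ∧ i' ≠ i))) := by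
  rw [blowUp]
  exact SimpleGraph.fromRel_adj _ _ _

lemma blowUp_adj_inl_inr {U : Type} (H : SimpleGraph U) (redH : U → Prop) {I : Type}
    (u : {v : U // redH v}) (i : I) (b : {v : U // ¬ redH v}) :
    (blowUp H redH I).Adj (Sum.inl (u, i)) (Sum.inr b) ↔
      (H.Adj u.1 b.1 ∨ H.Adj b.1 u.1) := by
  rw [blowUp]
  rw [SimpleGraph.fromRel_adj]
  simp only [ne_eq, reduceCtorEq, not_false_eq_true, true_and]

lemma blowUp_adj_inr_inr {U : Type} (H : SimpleGraph U) (redH : U → Prop) {I : Type}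
    (b b' : {v : U // ¬ redH v}) :
    (blowUp H redH I).Adj (Sum.inr b : {v : U // redH v} × I ⊕ _) (Sum.inr b') ↔
      (Sum.inr b : {v : U // redH v} × I ⊕ _) ≠ Sum.inr b' ∧
        (H.Adj b.1 b'.1 ∨ H.Adj b'.1 b.1) := by
  rw [blowUp]
  exact SimpleGraph.fromRel_adj _ _ _

variable {V : Type} {G : SimpleGraph V} {P : V → Prop} (hcliq : IsUnionOfCliques G {v | P v})
  {v₀ : V}
  (phi : (c : buQ G P hcliq) → buK G P (buRep G P hcliq c) ≃ buK G P v₀)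

lemma buH_not_adj_inl_inl (c c' : buQ G P hcliq) :
    ¬ (buH G P hcliq).Adj (Sum.inl c) (Sum.inl c') := fun h => h

lemma buH_adj_inl_inr (c : buQ G P hcliq) (b : {v : V // ¬ P v}) :
    (buH G P hcliq).Adj (Sum.inl c) (Sum.inr b) ↔ G.Adj (buRep G P hcliq c) b.1 := Iff.rfl

lemma buH_adj_inr_inl (c : buQ G P hcliq) (b : {v : V // ¬ P v}) :
    (buH G P hcliq).Adj (Sum.inr b) (Sum.inl c) ↔ G.Adj (buRep G P hcliq c) b.1 := Iff.rfl

lemma buH_adj_inr_inr (b b' : {v : V // ¬ P v}) :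
    (buH G P hcliq).Adj (Sum.inr b) (Sum.inr b') ↔ G.Adj b.1 b'.1 := Iff.rfl

lemma buAdj_iff
    (htwin : ∀ u v, P u → P v → G.Adj u v → ∀ w, w ≠ u → w ≠ v → (G.Adj w u ↔ G.Adj w v))
    (a b : V) :
    (blowUp (buH G P hcliq) (buRedH G P hcliq) (buK G P v₀)).Adj
      (buE hcliq phi a) (buE hcliq phi b) ↔ G.Adj a b := by
  have hinj := (buE_leftInv hcliq phi).injective
  by_cases ha : P a <;> by_cases hb : P b
  · -- both in P
    rw [buE_eq_of_P hcliq phi ha, buE_eq_of_P hcliq phi hb, blowUp_adj_inl_inl]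
    constructor
    · rintro ⟨hne, (h | ⟨hu, hi⟩) | (h | ⟨hu, hi⟩)⟩
      · exact absurd h (buH_not_adj_inl_inl hcliq _ _)
      · have hcc : Quotient.mk (buSetoid G P hcliq) ⟨a, ha⟩ =
            Quotient.mk (buSetoid G P hcliq) ⟨b, hb⟩ :=
          Sum.inl_injective (congrArg Subtype.val hu)
        rcases Quotient.exact hcc with h' | h'
        · exfalso; apply hi
          have hab : a = b := h'
          subst hab
          rfl
        · exact h'
      · exact absurd h (buH_not_adj_inl_inl hcliq _ _)
      · have hcc : Quotient.mk (buSetoid G P hcliq) ⟨b, hb⟩ =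
            Quotient.mk (buSetoid G P hcliq) ⟨a, ha⟩ :=
          Sum.inl_injective (congrArg Subtype.val hu)
        rcases Quotient.exact hcc with h' | h'
        · exfalso; apply hi
          have hab : b = a := h'
          subst hab
          rfl
        · exact h'.symm
    · intro hadj
      have hcc : Quotient.mk (buSetoid G P hcliq) ⟨a, ha⟩ =
          Quotient.mk (buSetoid G P hcliq) ⟨b, hb⟩ := Quotient.sound (Or.inr hadj)
      refine ⟨?_, Or.inl (Or.inr ⟨Subtype.ext (congrArg Sum.inl hcc), ?_⟩)⟩
      · rw [← buE_eq_of_P hcliq phi ha, ← buE_eq_of_P hcliq phi hb]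
        exact hinj.ne hadj.ne
      · intro he
        have h2 : phi _ (⟨a, hcc ▸ buE_P_mem hcliq ha rfl⟩ :
            buK G P (buRep G P hcliq (Quotient.mk (buSetoid G P hcliq) ⟨b, hb⟩))) =
            phi _ ⟨b, buE_P_mem hcliq hb rfl⟩ :=
          (buPhi_congr hcliq phi hcc _ _ rfl).symm.trans he
        have h3 := (phi _).injective h2
        exact hadj.ne (congrArg Subtype.val h3)
  · -- P a, ¬ P b
    rw [buE_eq_of_P hcliq phi ha, buE_eq_of_not_P hcliq phi hb, blowUp_adj_inl_inr]
    change G.Adj (buRep G P hcliq (Quotient.mk (buSetoid G P hcliq) ⟨a, ha⟩)) b ∨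
      G.Adj (buRep G P hcliq (Quotient.mk (buSetoid G P hcliq) ⟨a, ha⟩)) b ↔ G.Adj a b
    rw [or_self]
    rcases buRel_rep G P hcliq ha with h | h
    · rw [h]
    · have hb1 : b ≠ buRep G P hcliq (Quotient.mk (buSetoid G P hcliq) ⟨a, ha⟩) :=
        fun hbet => hb (hbet ▸ buRep_P G P hcliq _)
      have hb2 : b ≠ a := fun hba => hb (hba ▸ ha)
      rw [G.adj_comm _ b, G.adj_comm a b]
      exact htwin _ a (buRep_P G P hcliq _) ha h b hb1 hb2
  · -- ¬ P a, P b
    rw [(blowUp (buH G P hcliq) (buRedH G P hcliq) (buK G P v₀)).adj_comm, G.adj_comm]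
    rw [buE_eq_of_P hcliq phi hb, buE_eq_of_not_P hcliq phi ha, blowUp_adj_inl_inr]
    change G.Adj (buRep G P hcliq (Quotient.mk (buSetoid G P hcliq) ⟨b, hb⟩)) a ∨
      G.Adj (buRep G P hcliq (Quotient.mk (buSetoid G P hcliq) ⟨b, hb⟩)) a ↔ G.Adj b a
    rw [or_self]
    rcases buRel_rep G P hcliq hb with h | h
    · rw [h]
    · have hb1 : a ≠ buRep G P hcliq (Quotient.mk (buSetoid G P hcliq) ⟨b, hb⟩) :=
        fun hbet => ha (hbet ▸ buRep_P G P hcliq _)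
      have hb2 : a ≠ b := fun hba => ha (hba ▸ hb)
      rw [G.adj_comm _ a, G.adj_comm b a]
      exact htwin _ b (buRep_P G P hcliq _) hb h a hb1 hb2
  · -- both not in P
    rw [buE_eq_of_not_P hcliq phi ha, buE_eq_of_not_P hcliq phi hb, blowUp_adj_inr_inr]
    rw [buH_adj_inr_inr, buH_adj_inr_inr]
    constructor
    · rintro ⟨hne, h | h⟩
      · exact h
      · exact h.symm
    · intro hadj
      refine ⟨?_, Or.inl hadj⟩
      rw [← buE_eq_of_not_P hcliq phi ha, ← buE_eq_of_not_P hcliq phi hb]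
      exact hinj.ne hadj.ne

end BU3

lemma buLemma {V : Type} (G : SimpleGraph V) (P : V → Prop) [Countable V]
    (hcliq : IsUnionOfCliques G {v | P v})
    {v₀ w₀ : V} (hv₀ : P v₀) (hw₀ : P w₀) (hadj₀ : G.Adj v₀ w₀)
    (htwin : ∀ u v, P u → P v → G.Adj u v → ∀ w, w ≠ u → w ≠ v → (G.Adj w u ↔ G.Adj w v))
    (hequi : ∀ u, P u → Nonempty (buK G P u ≃ buK G P v₀)) :
    IsBlowUpOf G P := by
  classical
  have hch : ∀ c : buQ G P hcliq,
      Nonempty (buK G P (buRep G P hcliq c) ≃ buK G P v₀) :=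
    fun c => hequi _ (buRep_P G P hcliq c)
  let phi : (c : buQ G P hcliq) → buK G P (buRep G P hcliq c) ≃ buK G P v₀ :=
    fun c => Classical.choice (hch c)
  refine ⟨buU G P hcliq, buH G P hcliq, buRedH G P hcliq, buK G P v₀, ?_, ?_, ?_, ?_⟩
  · rintro (c | b) (c' | b') hu hv h
    · exact buH_not_adj_inl_inl hcliq c c' h
    · exact hv
    · exact hu
    · exact hu
  · rw [Cardinal.two_le_iff]
    refine ⟨⟨v₀, Or.inl rfl⟩, ⟨w₀, Or.inr ⟨hw₀, hadj₀⟩⟩, ?_⟩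
    intro h
    exact hadj₀.ne (congrArg Subtype.val h)
  · haveI : Countable (buK G P v₀) := by unfold buK; infer_instance
    exact Cardinal.mk_le_aleph0
  · refine ⟨⟨⟨buE hcliq phi, buE' hcliq phi, buE_leftInv hcliq phi,
      buE_rightInv hcliq phi⟩, ?_⟩, ?_⟩
    · intro a b
      exact buAdj_iff hcliq phi htwin a b
    · intro v
      show P v ↔ blowUpRed _ _ _ (buE hcliq phi v)
      by_cases h : P v
      · rw [buE_eq_of_P hcliq phi h]
        simp [blowUpRed, h]
      · rw [buE_eq_of_not_P hcliq phi h]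
        simp [blowUpRed, h]

section Helpers

variable {V : Type} {G : SimpleGraph V} {P : V → Prop}

lemma nbhd_image (ψ : G ≃g G) (hψ : ∀ x, P (ψ x) ↔ P x) (b : V) :
    {r | P r ∧ G.Adj (ψ b) r} = ψ '' {r | P r ∧ G.Adj b r} := by
  ext r
  constructor
  · rintro ⟨hr, hadj⟩
    refine ⟨ψ.symm r, ⟨?_, ?_⟩, ψ.apply_symm_apply r⟩
    · have := hψ (ψ.symm r)
      rw [ψ.apply_symm_apply] at this
      exact this.mp hr
    · have : G.Adj (ψ b) (ψ (ψ.symm r)) := by rwa [ψ.apply_symm_apply]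
      exact ψ.map_adj_iff.mp this
  · rintro ⟨r', ⟨hr', hadj'⟩, rfl⟩
    exact ⟨(hψ r').mpr hr', ψ.map_adj_iff.mpr hadj'⟩

/-- transport of cliques along color preserving automorphisms -/
def kEquiv (C : V → Prop) (ψ : G ≃g G) (hψC : ∀ x, C (ψ x) ↔ C x) (u : V) :
    {w : V // w = u ∨ (C w ∧ G.Adj u w)} ≃ {w : V // w = ψ u ∨ (C w ∧ G.Adj (ψ u) w)} where
  toFun w := ⟨ψ w.1, by
    rcases w.2 with h | ⟨h1, h2⟩
    · exact Or.inl (congrArg ψ h)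
    · exact Or.inr ⟨(hψC _).mpr h1, ψ.map_adj_iff.mpr h2⟩⟩
  invFun w := ⟨ψ.symm w.1, by
    rcases w.2 with h | ⟨h1, h2⟩
    · exact Or.inl (by rw [h, ψ.symm_apply_apply])
    · refine Or.inr ⟨?_, ?_⟩
      · have := hψC (ψ.symm w.1)
        rw [ψ.apply_symm_apply] at this
        exact this.mp h1
      · have : G.Adj (ψ u) (ψ (ψ.symm w.1)) := by rwa [ψ.apply_symm_apply]
        exact ψ.map_adj_iff.mp this⟩
  left_inv w := Subtype.ext (ψ.symm_apply_apply w.1)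
  right_inv w := Subtype.ext (ψ.apply_symm_apply w.1)

end Helpers


lemma isBlowUpOf_congr {V : Type} {G : SimpleGraph V} {P P' : V → Prop}
    (h : ∀ v, P' v ↔ P v) : IsBlowUpOf G P' → IsBlowUpOf G P := by
  rintro ⟨U, H, redH, I, h1, h2, h3, e, he⟩
  exact ⟨U, H, redH, I, h1, h2, h3, e, fun v => (h v).symm.trans (he v)⟩

lemma coreLemma {V : Type} (G : SimpleGraph V) (P : V → Prop)
    (hcnt : Countable V) (hinf : Infinite V)
    (hUH : Ultrahomogeneous G P)
    (hcliqP : IsUnionOfCliques G {v | P v})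
    (hcliqQ : IsUnionOfCliques G {v | ¬ P v})
    (hnbuP : ¬ IsBlowUpOf G P)
    (hnbuQ : ¬ IsBlowUpOf G (fun v => ¬ P v))
    (haP : ∃ u v, P u ∧ P v ∧ u ≠ v ∧ ¬ G.Adj u v)
    (haQ : ∃ u v, ¬ P u ∧ ¬ P v ∧ u ≠ v ∧ ¬ G.Adj u v)
    (hfin : {v | P v}.Finite) :
    (∀ u v, P u → P v → ¬ G.Adj u v) ∧ (∀ u v, ¬ P u → ¬ P v → ¬ G.Adj u v) ∧
      ((∀ u v, P u → ¬ P v → G.Adj u v) ∨ (∀ u v, P u → ¬ P v → ¬ G.Adj u v)) := by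
  classical
  haveI := hcnt
  haveI := hinf
  set N : V → Set V := fun b => {r | P r ∧ G.Adj b r} with hN
  have hNfin : ∀ b, (N b).Finite := fun b => hfin.subset (fun r hr => hr.1)
  have hNsub : ∀ b, N b ⊆ {v | P v} := fun b r hr => hr.1
  have hQinf : {v | ¬ P v}.Infinite := by
    intro hQfin
    have huniv : (Set.univ : Set V).Finite := by
      refine (hfin.union hQfin).subset ?_
      intro v _
      by_cases h : P v
      · exact Or.inl h
      · exact Or.inr h
    exact Set.infinite_univ huniv
  have hcard : ∀ b b', ¬ P b → ¬ P b' → (N b).ncard = (N b').ncard := by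
    intro b b' hb hb'
    obtain ⟨ψ, hψ, hψb⟩ := singleTrans hUH (iff_of_false hb' hb)
    have himg : N b' = ψ '' (N b) := by rw [← hψb]; exact nbhd_image ψ hψ b
    rw [himg, Set.ncard_image_of_injective _ ψ.injective]
  obtain ⟨p, q, hp, hq, hpq, hNpq⟩ :
      ∃ p q, ¬ P p ∧ ¬ P q ∧ p ≠ q ∧ N p = N q := by
    by_contra hcon
    push_neg at hcon
    have hQfin : {v : V | ¬ P v}.Finite := by
      have hsubs : {s : Set V | s ⊆ {v | P v}}.Finite := hfin.finite_subsets
      have hcover : {v : V | ¬ P v} ⊆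
          ⋃ s ∈ {s : Set V | s ⊆ {v | P v}}, {b | ¬ P b ∧ N b = s} := by
        intro b hb
        exact Set.mem_biUnion (hNsub b) ⟨hb, rfl⟩
      refine (Set.Finite.biUnion hsubs ?_).subset hcover
      intro s _
      apply Set.Subsingleton.finite
      intro a ha b hb
      by_contra hne
      exact hcon a b ha.1 hb.1 hne (ha.2.trans hb.2.symm)
    exact hQinf hQfin
  have hsame_nonadj : ¬ G.Adj p q →
      ∀ u v, ¬ P u → ¬ P v → ¬ G.Adj u v → u ≠ v → N u = N v := by
    intro hnadj u v hu hv huv hne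
    obtain ⟨ψ, hψ, hψp, hψq⟩ := pairTrans hUH hpq hne (iff_of_false hu hp)
      (iff_of_false hv hq) (iff_of_false huv hnadj)
    have hsub2 : ψ '' (N p) ⊆ N u ∩ N v := by
      rintro r ⟨r', hr'mem, rfl⟩
      obtain ⟨hr', hadj'⟩ := hr'mem
      have hrq : G.Adj q r' := (hNpq ▸ (⟨hr', hadj'⟩ : r' ∈ N p) : r' ∈ N q).2
      constructor
      · exact ⟨(hψ r').mpr hr', by rw [← hψp]; exact ψ.map_adj_iff.mpr hadj'⟩
      · exact ⟨(hψ r').mpr hr', by rw [← hψq]; exact ψ.map_adj_iff.mpr hrq⟩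
    have hkey : ∀ w, ¬ P w → (N w).ncard ≤ (N u ∩ N v).ncard := by
      intro w hw
      have h1 : (ψ '' (N p)).ncard = (N p).ncard :=
        Set.ncard_image_of_injective _ ψ.injective
      have h2 : (ψ '' (N p)).ncard ≤ (N u ∩ N v).ncard :=
        Set.ncard_le_ncard hsub2 ((hNfin u).inter_of_left _)
      rw [h1] at h2
      rwa [hcard p w hp hw] at h2
    have he1 : N u ∩ N v = N u :=
      Set.eq_of_subset_of_ncard_le Set.inter_subset_left (hkey u hu) (hNfin u)
    have he2 : N u ∩ N v = N v :=
      Set.eq_of_subset_of_ncard_le Set.inter_subset_right (hkey v hv) (hNfin v)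
    rw [← he1, he2]
  have htwinQ : ∀ x y, ¬ P x → ¬ P y → G.Adj x y → N x = N y := by
    intro x y hx hy hxy
    by_cases hadjpq : G.Adj p q
    · obtain ⟨ψ, hψ, hψx, hψy⟩ := pairTrans hUH hxy.ne hpq (iff_of_false hp hx)
        (iff_of_false hq hy) (iff_of_true hadjpq hxy)
      ext r
      constructor
      · rintro ⟨hr, hadj⟩
        refine ⟨hr, ?_⟩
        have h1 : ψ r ∈ N p :=
          ⟨(hψ r).mpr hr, by rw [← hψx]; exact ψ.map_adj_iff.mpr hadj⟩
        have h2 : ψ r ∈ N q := hNpq ▸ h1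
        have h3 := h2.2
        rw [← hψy] at h3
        exact ψ.map_adj_iff.mp h3
      · rintro ⟨hr, hadj⟩
        refine ⟨hr, ?_⟩
        have h1 : ψ r ∈ N q :=
          ⟨(hψ r).mpr hr, by rw [← hψy]; exact ψ.map_adj_iff.mpr hadj⟩
        have h2 : ψ r ∈ N p := hNpq.symm ▸ h1
        have h3 := h2.2
        rw [← hψx] at h3
        exact ψ.map_adj_iff.mp h3
    · by_cases hex : ∃ c, ¬ P c ∧ ¬ G.Adj c x ∧ ¬ G.Adj c y ∧ c ≠ x ∧ c ≠ y
      · obtain ⟨c, hc, hcx, hcy, hcx', hcy'⟩ := hex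
        have h1 : N x = N c := hsame_nonadj hadjpq x c hx hc
          (fun h => hcx h.symm) (fun h => hcx' h.symm)
        have h2 : N y = N c := hsame_nonadj hadjpq y c hy hc
          (fun h => hcy h.symm) (fun h => hcy' h.symm)
        rw [h1, h2]
      · exfalso
        have hboth : ∀ c, ¬ P c → c ≠ x → c ≠ y → G.Adj c x ∧ G.Adj c y := by
          intro c hc hcx hcy
          by_cases h1 : G.Adj c x
          · exact ⟨h1, hcliqQ c hc x hx y hy h1 hxy hcy⟩
          · by_cases h2 : G.Adj c y
            · exact ⟨hcliqQ c hc y hy x hx h2 hxy.symm hcx, h2⟩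
            · exact (hex ⟨c, hc, h1, h2, hcx, hcy⟩).elim
        obtain ⟨u0, v0, hu0, hv0, hne0, hnadj0⟩ := haQ
        by_cases h1 : u0 = x
        · subst h1
          by_cases h2 : v0 = y
          · subst h2; exact hnadj0 hxy
          · exact hnadj0 ((hboth v0 hv0 (Ne.symm hne0) h2).1).symm
        · by_cases h1' : u0 = y
          · subst h1'
            by_cases h2 : v0 = x
            · subst h2; exact hnadj0 hxy.symm
            · exact hnadj0 ((hboth v0 hv0 h2 (Ne.symm hne0)).2).symm
          · by_cases h2 : v0 = x
            · subst h2; exact hnadj0 (hboth u0 hu0 h1 h1').1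
            · by_cases h2' : v0 = y
              · subst h2'; exact hnadj0 (hboth u0 hu0 h1 h1').2
              · have ha1 := (hboth u0 hu0 h1 h1').1
                have ha2 := (hboth v0 hv0 h2 h2').1
                exact hnadj0 (hcliqQ u0 hu0 x hx v0 hv0 ha1 ha2.symm hne0)
  have hQindep : ∀ x y, ¬ P x → ¬ P y → ¬ G.Adj x y := by
    intro x y hx hy hxy
    apply hnbuQ
    refine buLemma G (fun v => ¬ P v) hcliqQ hx hy hxy ?_ ?_
    · intro u v hu hv huv w hwu hwv
      by_cases hw : P w
      · have h := htwinQ u v hu hv huv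
        constructor
        · intro hadj
          exact ((h ▸ (⟨hw, hadj.symm⟩ : w ∈ N u)) : w ∈ N v).2.symm
        · intro hadj
          exact ((h.symm ▸ (⟨hw, hadj.symm⟩ : w ∈ N v)) : w ∈ N u).2.symm
      · constructor
        · intro hadj; exact hcliqQ w hw u hu v hv hadj huv hwv
        · intro hadj; exact hcliqQ w hw v hv u hu hadj.symm.symm huv.symm hwu
    · intro u hu
      obtain ⟨ψ, hψ, hψu⟩ := singleTrans hUH (iff_of_false hx hu)
      exact ⟨hψu ▸ kEquiv (fun v => ¬ P v) ψ (fun z => not_congr (hψ z)) u⟩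
  have hallN : ∀ x y, ¬ P x → ¬ P y → N x = N y := by
    intro x y hx hy
    rcases eq_or_ne x y with rfl | hne
    · rfl
    · exact hsame_nonadj (hQindep p q hp hq) x y hx hy (hQindep x y hx hy) hne
  have hcross : (∀ u v, P u → ¬ P v → G.Adj u v) ∨
      (∀ u v, P u → ¬ P v → ¬ G.Adj u v) := by
    by_cases hex : ∃ r b, P r ∧ ¬ P b ∧ G.Adj r b
    · left
      obtain ⟨r, b, hr, hb, hrb⟩ := hex
      intro u v hu hv
      obtain ⟨ψ, hψ, hψr⟩ := singleTrans hUH (iff_of_true hu hr)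
      have hub : G.Adj u (ψ b) := by rw [← hψr]; exact ψ.map_adj_iff.mpr hrb
      have hbb : ¬ P (ψ b) := fun h => hb ((hψ b).mp h)
      have hmem : u ∈ N v := (hallN (ψ b) v hbb hv) ▸ (⟨hu, hub.symm⟩ : u ∈ N (ψ b))
      exact hmem.2.symm
    · right
      intro u v hu hv hadj
      exact hex ⟨u, v, hu, hv, hadj⟩
  have hPindep : ∀ u v, P u → P v → ¬ G.Adj u v := by
    intro x y hx hy hxy
    apply hnbuP
    refine buLemma G P hcliqP hx hy hxy ?_ ?_
    · intro u v hu hv huv w hwu hwv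
      by_cases hw : P w
      · constructor
        · intro hadj; exact hcliqP w hw u hu v hv hadj huv hwv
        · intro hadj; exact hcliqP w hw v hv u hu hadj huv.symm hwu
      · rcases hcross with hall | hnone
        · exact iff_of_true (hall u w hu hw).symm (hall v w hv hw).symm
        · exact iff_of_false (fun h => hnone u w hu hw h.symm)
            (fun h => hnone v w hv hw h.symm)
    · intro u hu
      obtain ⟨ψ, hψ, hψu⟩ := singleTrans hUH (iff_of_true hx hu)
      exact ⟨hψu ▸ kEquiv P ψ hψ u⟩
  exact ⟨hPindep, hQindep, hcross⟩

/-- In a basic CUH graph with a finite color class, both color classes are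
independent sets (ω_R = ω_B = 1) and the graph is homogeneously connected. -/
theorem stmt_1 {V : Type} (G : SimpleGraph V) (red : V → Prop)
    (hG : IsBasicCUH G red)
    (hfin : {v | red v}.Finite ∨ {v | ¬ red v}.Finite) :
    (∀ u v, red u → red v → ¬ G.Adj u v) ∧
    (∀ u v, ¬ red u → ¬ red v → ¬ G.Adj u v) ∧
    ((∀ u v, red u → ¬ red v → G.Adj u v) ∨ (∀ u v, red u → ¬ red v → ¬ G.Adj u v)) := by
  obtain ⟨⟨hcnt, hinf, hUH, hcliqR, hcliqB⟩, hnbu, haR, haB⟩ := hG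
  have hnbuR : ¬ IsBlowUpOf G red := fun h => hnbu (Or.inl h)
  have hnbuB : ¬ IsBlowUpOf G (fun v => ¬ red v) := fun h => hnbu (Or.inr h)
  rcases hfin with hfinR | hfinB
  · exact coreLemma G red hcnt hinf hUH hcliqR hcliqB hnbuR hnbuB haR haB hfinR
  · have hUH' := uh_neg hUH
    have hsetseq : {v : V | ¬ ¬ red v} = {v | red v} := by
      ext v; exact not_not
    have hcliqB' : IsUnionOfCliques G {v | ¬ ¬ red v} := by
      rw [hsetseq]; exact hcliqR
    have hnbuB' : ¬ IsBlowUpOf G (fun v => ¬ ¬ red v) :=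
      fun h => hnbuR (isBlowUpOf_congr (fun v => not_not) h)
    have haR' : ∃ u v, ¬ ¬ red u ∧ ¬ ¬ red v ∧ u ≠ v ∧ ¬ G.Adj u v := by
      obtain ⟨u, v, h1, h2, h3, h4⟩ := haR
      exact ⟨u, v, not_not_intro h1, not_not_intro h2, h3, h4⟩
    obtain ⟨h1, h2, h3⟩ := coreLemma G (fun v => ¬ red v) hcnt hinf hUH' hcliqB
      hcliqB' hnbuB hnbuB' haB haR' hfinB
    refine ⟨?_, h1, ?_⟩
    · exact fun u v hu hv h => h2 u v (not_not_intro hu) (not_not_intro hv) h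
    · rcases h3 with h | h
      · exact Or.inl (fun u v hu hv => (h v u hv (not_not_intro hu)).symm)
      · exact Or.inr (fun u v hu hv hadj => h v u hv (not_not_intro hu) hadj.symm)
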